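/- arXiv:1903.11429 — 3 statements merged into one kernel-verified Lean document; each statement's English description precedes it below -/
import Mathlib

section
/- Let {K(t)}_{t≥1} be (n−1)×(n−1) substochastic matrices (nonnegative entries, row sums ≤ 1), each upper-triangular with zero diagonal. For α ∈ (0,1), let Q(t) = (1−α)·I + α·K(t). Then the infinite product Π_{t=1}^∞ Q(t) converges to the zero matrix; in particular for T > n, the induced ∞-norm of Π_{t=1}^T Q(t) is bounded above by Σ_{k=0}^{n} C(T,k) α^k (1−α)^{T−k}, which tends to 0 as T → ∞. -/
open Filter

private lemma stmt4_rep {m : ℕ} (α : ℝ)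
    (K : ℕ → Matrix (Fin (m+1)) (Fin (m+1)) ℝ)
    (hKpos : ∀ t i j, 0 ≤ K t i j)
    (hKrow : ∀ t i, ∑ j, K t i j ≤ 1)
    (hKut : ∀ t (i j : Fin (m+1)), (j:ℕ) < (i:ℕ) + 1 → K t i j = 0)
    (Q : ℕ → Matrix (Fin (m+1)) (Fin (m+1)) ℝ)
    (hQ : ∀ t, Q t = (1 - α) • (1 : Matrix (Fin (m+1)) (Fin (m+1)) ℝ) + α • K t)
    (T : ℕ) :
    ∃ S : ℕ → Matrix (Fin (m+1)) (Fin (m+1)) ℝ,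
      (∀ k i j, 0 ≤ S k i j) ∧
      (∀ k i, ∑ j, S k i j ≤ (T.choose k : ℝ)) ∧
      (∀ (k : ℕ) (i j : Fin (m+1)), (j:ℕ) < (i:ℕ) + k → S k i j = 0) ∧
      ((List.range T).map (fun t => Q (t+1))).prod
        = ∑ k ∈ Finset.range (m+2), (α^k * (1-α)^(T-k)) • S k := by
  induction T with
  | zero =>
    refine ⟨fun k => if k = 0 then 1 else 0, ?_, ?_, ?_, ?_⟩
    · intro k i j
      by_cases hk : k = 0 <;> simp [hk, Matrix.one_apply]
      · positivity
    · intro k i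
      by_cases hk : k = 0 <;> simp [hk, Matrix.one_apply]
    · intro k i j hj
      by_cases hk : k = 0
      · subst hk
        simp only [if_pos rfl]
        exact Matrix.one_apply_ne (by intro he; subst he; omega)
      · simp [hk]
    · rw [Finset.sum_eq_single 0]
      · simp
      · intro k _ hk; simp [hk]
      · simp
  | succ T ih =>
    obtain ⟨S, hpos, hrow, hsupp, hrep⟩ := ih
    -- S k = 0 for T < k
    have hzero : ∀ k, T < k → S k = 0 := by
      intro k hk
      ext i j
      have h1 : S k i j ≤ ∑ j', S k i j' :=
        Finset.single_le_sum (f := fun j' => S k i j') (fun j' _ => hpos k i j')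
          (Finset.mem_univ j)
      have h2 := hrow k i
      rw [Nat.choose_eq_zero_of_lt hk] at h2
      simp only [Nat.cast_zero] at h2
      have := hpos k i j
      simp only [Matrix.zero_apply]
      linarith
    have hStop : S (m+1) = 0 := by
      ext i j
      exact hsupp (m+1) i j (by omega)
    set K' := K (T+1) with hK'
    refine ⟨fun k => S k + (if k = 0 then 0 else S (k-1) * K'), ?_, ?_, ?_, ?_⟩
    · intro k i j
      by_cases hk : k = 0
      · simp [hk]; exact hpos 0 i j
      · simp only [if_neg hk, Matrix.add_apply, Matrix.mul_apply]
        apply add_nonneg (hpos k i j)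
        exact Finset.sum_nonneg fun l _ => mul_nonneg (hpos (k-1) i l) (hKpos (T+1) l j)
    · intro k i
      by_cases hk : k = 0
      · simpa [hk] using (hrow 0 i).trans (by simp [Nat.choose_zero_right])
      · obtain ⟨k', rfl⟩ : ∃ k', k = k' + 1 := ⟨k - 1, by omega⟩
        simp only [if_neg hk, Matrix.add_apply, Finset.sum_add_distrib,
          Nat.add_sub_cancel]
        have hmul : ∑ j, (S k' * K') i j ≤ ∑ j, S k' i j := by
          simp only [Matrix.mul_apply]
          rw [Finset.sum_comm]
          calc ∑ l, ∑ j, S k' i l * K' l j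
              = ∑ l, S k' i l * ∑ j, K' l j := by
                simp [Finset.mul_sum]
            _ ≤ ∑ l, S k' i l * 1 :=
                Finset.sum_le_sum fun l _ =>
                  mul_le_mul_of_nonneg_left (hKrow (T+1) l) (hpos k' i l)
            _ = ∑ l, S k' i l := by simp
        have := add_le_add (hrow (k'+1) i) (hmul.trans (hrow k' i))
        calc (∑ j, S (k'+1) i j) + ∑ j, (S k' * K') i j
            ≤ (T.choose (k'+1) : ℝ) + T.choose k' := this
          _ = ((T+1).choose (k'+1) : ℝ) := by
              rw [Nat.choose_succ_succ]
              push_cast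
              ring
    · intro k i j hj
      by_cases hk : k = 0
      · subst hk
        simpa using hsupp 0 i j (by omega)
      · obtain ⟨k', rfl⟩ : ∃ k', k = k' + 1 := ⟨k - 1, by omega⟩
        simp only [if_neg hk, Matrix.add_apply, Nat.add_sub_cancel]
        rw [hsupp (k'+1) i j hj, zero_add, Matrix.mul_apply]
        apply Finset.sum_eq_zero
        intro l _
        by_cases hl : (l:ℕ) < (i:ℕ) + k'
        · rw [hsupp k' i l hl, zero_mul]
        · have : K' l j = 0 := hKut (T+1) l j (by omega)
          rw [this, mul_zero]
    · rw [List.range_succ, List.map_append, List.prod_append]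
      simp only [List.map_cons, List.map_nil, List.prod_cons, List.prod_nil, mul_one]
      rw [hrep, hQ (T+1)]
      rw [Matrix.mul_add, Matrix.mul_smul, Matrix.mul_smul, Matrix.mul_one]
      rw [Finset.sum_mul]
      have hsplit : ∑ k ∈ Finset.range (m+2),
          (α^k * (1-α)^(T+1-k)) • (S k + (if k = 0 then 0 else S (k-1) * K'))
          = (∑ k ∈ Finset.range (m+2), (α^k * (1-α)^(T+1-k)) • S k)
            + ∑ k ∈ Finset.range (m+2),
              (α^k * (1-α)^(T+1-k)) • (if k = 0 then 0 else S (k-1) * K') := by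
        rw [← Finset.sum_add_distrib]
        exact Finset.sum_congr rfl fun k _ => smul_add _ _ _
      rw [hsplit]
      congr 1
      · -- first sums
        rw [Finset.smul_sum]
        apply Finset.sum_congr rfl
        intro k _
        rw [smul_smul]
        by_cases hkT : k ≤ T
        · congr 1
          rw [show T + 1 - k = (T - k) + 1 from by omega, pow_succ]
          ring
        · rw [hzero k (by omega), smul_zero, smul_zero]
      · -- second sums
        rw [Finset.smul_sum]
        conv_lhs => rw [Finset.sum_range_succ]
        conv_rhs => rw [Finset.sum_range_succ' _ (m+1)]
        rw [hStop]
        simp only [smul_zero, Matrix.zero_mul, zero_mul, add_zero, Nat.succ_ne_zero,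
          ite_false, ite_true, Nat.add_sub_cancel, Nat.succ_sub_succ]
        apply Finset.sum_congr rfl
        intro k _
        rw [smul_mul_assoc, smul_smul]
        congr 1
        rw [pow_succ]
        ring



private lemma stmt4_bound_tendsto (α : ℝ) (hα0 : 0 < α) (hα1 : α < 1) (n : ℕ) :
    Tendsto (fun T : ℕ => ∑ k ∈ Finset.range (n+1),
      (T.choose k : ℝ) * α ^ k * (1 - α) ^ (T - k)) atTop (nhds 0) := by
  have h1α : (0:ℝ) < 1 - α := by linarith
  have h0 : (0:ℝ) = ∑ k ∈ Finset.range (n+1), (0:ℝ) := by simp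
  rw [h0]
  apply tendsto_finset_sum
  intro k _
  have hr : ‖1 - α‖ < 1 := by
    rw [Real.norm_eq_abs, abs_of_pos h1α]; linarith
  have hsum : Summable (fun T : ℕ => (T : ℝ) ^ k * (1-α) ^ T) :=
    summable_pow_mul_geometric_of_norm_lt_one k hr
  have hg : Tendsto (fun T : ℕ => (α^k / (1-α)^k) * ((T:ℝ)^k * (1-α)^T))
      atTop (nhds 0) := by
    simpa using (hsum.tendsto_atTop_zero).const_mul (α^k / (1-α)^k)
  apply squeeze_zero_norm' ?_ hg
  filter_upwards [eventually_ge_atTop k] with T hT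
  have hnn : (0:ℝ) ≤ (T.choose k : ℝ) * α ^ k * (1 - α) ^ (T - k) := by
    apply mul_nonneg (mul_nonneg (Nat.cast_nonneg _) (pow_nonneg hα0.le _))
      (pow_nonneg h1α.le _)
  rw [Real.norm_eq_abs, abs_of_nonneg hnn]
  have hps : (1-α) ^ (T - k) = (1-α)^T * ((1-α)^k)⁻¹ := pow_sub₀ _ (ne_of_gt h1α) hT
  have hc : (T.choose k : ℝ) ≤ (T:ℝ)^k := by exact_mod_cast Nat.choose_le_pow T k
  rw [hps]
  calc (T.choose k : ℝ) * α ^ k * ((1-α)^T * ((1-α)^k)⁻¹)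
      ≤ (T:ℝ)^k * α ^ k * ((1-α)^T * ((1-α)^k)⁻¹) := by
        apply mul_le_mul_of_nonneg_right
          (mul_le_mul_of_nonneg_right hc (pow_nonneg hα0.le _))
        positivity
    _ = (α^k / (1-α)^k) * ((T:ℝ)^k * (1-α)^T) := by
        field_simp

/-- For substochastic, upper-triangular, zero-diagonal matrices `K(t)` of size
`(n−1) × (n−1)` and `Q(t) = (1−α)I + αK(t)` with `α ∈ (0,1)`, the partial products
`Π_{t=1}^T Q(t)` have induced `ℓ∞`-norm (row absolute sums) bounded by
`Σ_{k=0}^{n} C(T,k) α^k (1−α)^{T−k}` for `T > n`, and the infinite product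
converges to the zero matrix. -/

theorem stmt4 {n : ℕ} (hn : 2 ≤ n) (α : ℝ) (hα : 0 < α ∧ α < 1)
    (K : ℕ → Matrix (Fin (n - 1)) (Fin (n - 1)) ℝ)
    (hKpos : ∀ t i j, 0 ≤ K t i j)
    (hKrow : ∀ t i, ∑ j, K t i j ≤ 1)
    (hKdiag : ∀ t i, K t i i = 0)
    (hKut : ∀ t (i j : Fin (n - 1)), j < i → K t i j = 0)
    (Q : ℕ → Matrix (Fin (n - 1)) (Fin (n - 1)) ℝ)
    (hQ : ∀ t, Q t = (1 - α) • (1 : Matrix (Fin (n - 1)) (Fin (n - 1)) ℝ) + α • K t) :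
    (∀ T : ℕ, n < T → ∀ i,
      ∑ j, |((List.range T).map (fun t => Q (t + 1))).prod i j| ≤
        ∑ k ∈ Finset.range (n + 1), (T.choose k : ℝ) * α ^ k * (1 - α) ^ (T - k)) ∧
    Tendsto (fun T : ℕ => ((List.range T).map (fun t => Q (t + 1))).prod)
      atTop (nhds 0) := by
  obtain ⟨hα0, hα1⟩ := hα
  obtain ⟨m, rfl⟩ : ∃ m, n = m + 2 := ⟨n - 2, by omega⟩
  have h1α : (0:ℝ) < 1 - α := by linarith
  have hKut' : ∀ t (i j : Fin (m + 1)), (j:ℕ) < (i:ℕ) + 1 → K t i j = 0 := by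
    intro t i j h
    rcases lt_or_eq_of_le (Nat.lt_succ_iff.mp h) with h' | h'
    · exact hKut t i j (Fin.lt_def.mpr h')
    · have hij : j = i := Fin.ext h'
      subst hij; exact hKdiag t j
  have hbound : ∀ T : ℕ, m + 2 < T → ∀ i : Fin (m + 1),
      ∑ j, |((List.range T).map (fun t => Q (t + 1))).prod i j| ≤
        ∑ k ∈ Finset.range (m + 2 + 1), (T.choose k : ℝ) * α ^ k * (1 - α) ^ (T - k) := by
    intro T hT i
    obtain ⟨S, hpos, hrow, hsupp, hrep⟩ :=
      stmt4_rep α K hKpos hKrow hKut' Q hQ T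
    rw [hrep]
    have hcnn : ∀ k : ℕ, (0:ℝ) ≤ α ^ k * (1 - α) ^ (T - k) := fun k =>
      mul_nonneg (pow_nonneg hα0.le _) (pow_nonneg h1α.le _)
    have hentry : ∀ j, 0 ≤ (∑ k ∈ Finset.range (m+2), (α^k * (1-α)^(T-k)) • S k) i j := by
      intro j
      simp only [Matrix.sum_apply, Matrix.smul_apply, smul_eq_mul]
      exact Finset.sum_nonneg fun k _ => mul_nonneg (hcnn k) (hpos k i j)
    calc ∑ j, |(∑ k ∈ Finset.range (m+2), (α^k * (1-α)^(T-k)) • S k) i j|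
        = ∑ j, (∑ k ∈ Finset.range (m+2), (α^k * (1-α)^(T-k)) • S k) i j :=
          Finset.sum_congr rfl fun j _ => abs_of_nonneg (hentry j)
      _ = ∑ k ∈ Finset.range (m+2), (α^k * (1-α)^(T-k)) * ∑ j, S k i j := by
          simp only [Matrix.sum_apply, Matrix.smul_apply, smul_eq_mul]
          rw [Finset.sum_comm]
          exact Finset.sum_congr rfl fun k _ => (Finset.mul_sum _ _ _).symm
      _ ≤ ∑ k ∈ Finset.range (m+2), (T.choose k : ℝ) * α^k * (1-α)^(T-k) := by
          apply Finset.sum_le_sum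
          intro k _
          calc (α^k * (1-α)^(T-k)) * ∑ j, S k i j
              ≤ (α^k * (1-α)^(T-k)) * (T.choose k : ℝ) :=
                mul_le_mul_of_nonneg_left (hrow k i) (hcnn k)
            _ = (T.choose k : ℝ) * α^k * (1-α)^(T-k) := by ring
      _ ≤ ∑ k ∈ Finset.range (m + 2 + 1), (T.choose k : ℝ) * α^k * (1-α)^(T-k) := by
          conv_rhs => rw [Finset.sum_range_succ]
          have : (0:ℝ) ≤ (T.choose (m+2) : ℝ) * α^(m+2) * (1-α)^(T-(m+2)) :=
            mul_nonneg (mul_nonneg (Nat.cast_nonneg _) (pow_nonneg hα0.le _))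
              (pow_nonneg h1α.le _)
          linarith
  refine ⟨hbound, ?_⟩
  apply tendsto_pi_nhds.2
  intro i
  apply tendsto_pi_nhds.2
  intro j
  apply squeeze_zero_norm' ?_ (stmt4_bound_tendsto α hα0 hα1 (m + 2))
  filter_upwards [eventually_gt_atTop (m + 2)] with T hT
  have h1 : |((List.range T).map (fun t => Q (t + 1))).prod i j| ≤
      ∑ j', |((List.range T).map (fun t => Q (t + 1))).prod i j'| :=
    Finset.single_le_sum (f := fun j' => |((List.range T).map (fun t => Q (t + 1))).prod i j'|)
      (fun j' _ => abs_nonneg _) (Finset.mem_univ j)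
  exact h1.trans (hbound T hT i)
end

section
/- Let {Q(t)}_{t≥1} be a sequence of n×n row-stochastic upper-triangular matrices of the form Q(t) = (1−α)I + αK(t) on the first n−1 rows and with last row equal to e_n (i.e., Q(t)_{nn} = 1 and Q(t)_{nj} = 0 for j < n), where α ∈ (0,1), K(t) is row-stochastic with zero diagonal on the first n−1 rows, and the zero pattern of K(t) is constant in t. Then for any x₀ ∈ [0,1]^n with last coordinate x_n⁰, the iterates x(t) = Q(t)·x(t−1) converge to the consensus vector (x_n⁰, ..., x_n⁰). -/
open Filter

lemma aux_geo (r : ℝ) (hr0 : 0 ≤ r) (hr1 : r < 1) (a c : ℕ → ℝ)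
    (hrec : ∀ t, |a (t+1)| ≤ r * |a t| + c t)
    (hc : Tendsto c atTop (nhds 0)) :
    Tendsto a atTop (nhds 0) := by
  rw [Metric.tendsto_atTop]
  intro ε hε
  have hε2 : 0 < ε/2 := by positivity
  have h1r : 0 < 1 - r := by linarith
  obtain ⟨N, hN⟩ := Metric.tendsto_atTop.mp hc (ε/2 * (1-r)) (by positivity)
  have key : ∀ k, |a (N+k)| ≤ r^k * |a N| + ε/2 := by
    intro k
    induction k with
    | zero => simp; linarith [abs_nonneg (a N)]
    | succ k ih =>
      have h1 := hrec (N+k)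
      have h2 := hN (N+k) (Nat.le_add_right _ _)
      rw [Real.dist_eq, sub_zero] at h2
      have h3 : c (N+k) ≤ ε/2 * (1-r) := le_of_lt (lt_of_le_of_lt (le_abs_self _) h2)
      have : N + (k+1) = (N + k) + 1 := by ring
      rw [this]
      calc |a (N+k+1)| ≤ r * |a (N+k)| + c (N+k) := h1
        _ ≤ r * (r^k * |a N| + ε/2) + ε/2*(1-r) :=
            add_le_add (mul_le_mul_of_nonneg_left ih hr0) h3
        _ = r^(k+1) * |a N| + ε/2 := by ring
  have hg : Tendsto (fun k => r^k * |a N|) atTop (nhds 0) := by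
    simpa using (tendsto_pow_atTop_nhds_zero_of_lt_one hr0 hr1).mul_const |a N|
  obtain ⟨M, hM⟩ := (Metric.tendsto_atTop.mp hg) (ε/2) hε2
  refine ⟨N + M, fun t ht => ?_⟩
  rw [Real.dist_eq, sub_zero]
  have ht' : N + (t - N) = t := by omega
  have h1 := key (t - N)
  have h2 := hM (t - N) (by omega)
  rw [Real.dist_eq, sub_zero] at h2
  have h3 : r ^ (t - N) * |a N| ≤ abs (r ^ (t-N) * abs (a N)) := le_abs_self _
  rw [ht'] at h1
  linarith [lt_of_le_of_lt h3 h2]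


/-- Consensus lemma: for upper-triangular row-stochastic update matrices
`Q(t) = (1−α)I + αK(t)` on the first `n−1` rows, with the last row equal to the
last standard basis vector and a constant zero pattern for `K(t)`, the iterates
`x(t) = Q(t)x(t−1)` starting from `x₀ ∈ [0,1]^n` converge to the consensus
vector all of whose entries equal the last coordinate of `x₀`. -/
theorem stmt6 {n : ℕ} (hn : 0 < n) (α : ℝ) (hα : 0 < α ∧ α < 1)
    (lst : Fin n) (hlst : (lst : ℕ) = n - 1)
    (K : ℕ → Matrix (Fin n) (Fin n) ℝ)
    (hK : ∀ t (i : Fin n), i ≠ lst →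
      (∀ j, 0 ≤ K t i j) ∧ K t i i = 0 ∧ (∑ j, K t i j) = 1 ∧
      (∀ j : Fin n, j < i → K t i j = 0))
    (hpat : ∀ t s i j, (K t i j = 0 ↔ K s i j = 0))
    (Q : ℕ → Matrix (Fin n) (Fin n) ℝ)
    (hQ : ∀ t i j, Q t i j =
      if i = lst then (if j = lst then 1 else 0)
      else (1 - α) * (if i = j then 1 else 0) + α * K t i j)
    (x0 : Fin n → ℝ) (hx0 : ∀ i, 0 ≤ x0 i ∧ x0 i ≤ 1)
    (x : ℕ → Fin n → ℝ) (hxinit : x 0 = x0)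
    (hiter : ∀ t, x (t + 1) = (Q (t + 1)).mulVec (x t)) :
    Tendsto (fun t => x t) atTop (nhds (fun _ => x0 lst)) := by
  obtain ⟨hα0, hα1⟩ := hα
  set L := x0 lst with hLdef
  -- the last coordinate is constant
  have hlast : ∀ t, x t lst = L := by
    intro t
    induction t with
    | zero => rw [hxinit]
    | succ t ih =>
      rw [hiter t]
      have hQl : ∀ j, Q (t+1) lst j = if j = lst then 1 else 0 := fun j => by
        rw [hQ]; simp
      simp only [Matrix.mulVec, dotProduct, hQl, ite_mul, one_mul, zero_mul]
      rw [Finset.sum_ite_eq' Finset.univ lst (fun j => x t j)]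
      simpa using ih
  -- every coordinate i is bounded by its cofinal position; main downward induction
  have main : ∀ d : ℕ, ∀ i : Fin n, (lst : ℕ) - (i : ℕ) = d →
      Tendsto (fun t => x t i) atTop (nhds L) := by
    intro d
    induction d using Nat.strong_induction_on with
    | _ d ih =>
      intro i hid
      by_cases hi : i = lst
      · subst hi
        exact Tendsto.congr (fun t => (hlast t).symm) tendsto_const_nhds
      · have hilt : (i : ℕ) < (lst : ℕ) := by
          have h1 : (i : ℕ) < n := i.isLt
          have h2 : (i : ℕ) ≠ (lst : ℕ) := fun h => hi (Fin.ext h)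
          omega
        -- row recursion
        have hrow : ∀ t, x (t+1) i = (1-α) * x t i + α * ∑ j, K (t+1) i j * x t j := by
          intro t
          rw [hiter t]
          simp only [Matrix.mulVec, dotProduct, hQ, if_neg hi]
          have hsplit : ∀ j : Fin n,
              ((1-α) * (if i = j then 1 else 0) + α * K (t+1) i j) * x t j
              = (1-α) * ((if i = j then x t j else 0)) + α * (K (t+1) i j * x t j) := by
            intro j; by_cases h : i = j <;> simp [h] <;> ring
          rw [Finset.sum_congr rfl (fun j _ => hsplit j), Finset.sum_add_distrib,
            ← Finset.mul_sum, ← Finset.mul_sum,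
            Finset.sum_ite_eq Finset.univ i (fun j => x t j)]
          simp
        -- the perturbation tends to 0
        have hS : Tendsto (fun t => ∑ j, K (t+1) i j * (x t j - L)) atTop (nhds 0) := by
          have : Tendsto (fun t => ∑ j : Fin n, K (t+1) i j * (x t j - L)) atTop
              (nhds (∑ j : Fin n, 0)) := by
            apply tendsto_finset_sum
            intro j _
            by_cases hij : i < j
            · -- j above i : use induction hypothesis
              have hjle : (j : ℕ) ≤ (lst : ℕ) := by
                have := j.isLt; omega
              have hdlt : (lst : ℕ) - (j : ℕ) < d := by
                have : (i : ℕ) < (j : ℕ) := hij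
                omega
              have hxj : Tendsto (fun t => x t j) atTop (nhds L) :=
                ih _ (by omega) j rfl
              have hy : Tendsto (fun t => x t j - L) atTop (nhds 0) := by
                simpa using hxj.sub_const L
              refine squeeze_zero_norm (f := fun t => K (t+1) i j * (x t j - L))
                (a := fun t => |x t j - L|) (fun t => ?_) (by simpa using hy.abs)
              · 
                have hKn := (hK (t+1) i hi).1 j
                have hKs := (hK (t+1) i hi).2.2.1
                have hK1 : K (t+1) i j ≤ 1 := by
                  rw [← hKs]
                  exact Finset.single_le_sum (fun j _ => (hK (t+1) i hi).1 j)
                    (Finset.mem_univ j)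
                rw [Real.norm_eq_abs, abs_mul, abs_of_nonneg hKn]
                exact mul_le_of_le_one_left (abs_nonneg _) hK1
            · -- j ≤ i : entry vanishes
              have hz : ∀ t, K (t+1) i j = 0 := by
                intro t
                rcases lt_or_eq_of_le (le_of_not_gt hij) with h | h
                · exact (hK (t+1) i hi).2.2.2 j h
                · rw [h]; exact (hK (t+1) i hi).2.1
              simp only [hz, zero_mul]
              exact tendsto_const_nhds
          simpa using this
        -- set up the contraction
        have hrec : ∀ t, |x (t+1) i - L| ≤ (1-α) * |x t i - L|
            + α * |∑ j, K (t+1) i j * (x t j - L)| := by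
          intro t
          have hsum : ∑ j, K (t+1) i j * (x t j - L)
              = (∑ j, K (t+1) i j * x t j) - L := by
            have hKs := (hK (t+1) i hi).2.2.1
            rw [Finset.sum_congr rfl (fun j _ => mul_sub (K (t+1) i j) (x t j) L),
              Finset.sum_sub_distrib, ← Finset.sum_mul, hKs, one_mul]
          have heq : x (t+1) i - L = (1-α) * (x t i - L)
              + α * (∑ j, K (t+1) i j * (x t j - L)) := by
            rw [hrow t, hsum]; ring
          rw [heq]
          calc |(1-α) * (x t i - L) + α * (∑ j, K (t+1) i j * (x t j - L))|
              ≤ |(1-α) * (x t i - L)| + |α * (∑ j, K (t+1) i j * (x t j - L))| := abs_add_le _ _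
            _ = (1-α) * |x t i - L| + α * |∑ j, K (t+1) i j * (x t j - L)| := by
                rw [abs_mul, abs_mul, abs_of_nonneg (by linarith : (0:ℝ) ≤ 1-α),
                  abs_of_nonneg (le_of_lt hα0)]
        have hc : Tendsto (fun t => α * |∑ j, K (t+1) i j * (x t j - L)|) atTop (nhds 0) := by
          simpa using (hS.abs.const_mul α)
        have := aux_geo (1-α) (by linarith) (by linarith)
          (fun t => x t i - L) (fun t => α * |∑ j, K (t+1) i j * (x t j - L)|)
          hrec hc
        have := this.add_const L
        simpa using this
  rw [tendsto_pi_nhds]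
  intro i
  exact main ((lst : ℕ) - (i : ℕ)) i rfl
end

section
/- Let A be a 2×2 prisoner's dilemma matrix and let G be the complete graph on n vertices. Under the imitation dynamics, if player n has maximal initial payoff (P_n(x₀) ≥ P_i(x₀) for all i), then player n plays the dominant (defect) strategy with highest probability among all players at every time, P_n(t) remains maximal for all t, and all strategies converge to x^n₀. -/
open Filter

lemma aux_payoff_id {n : ℕ} (R Sp T Pp : ℝ) (pay : ℝ → ℝ → ℝ)
    (hpay : ∀ a b, pay a b =
      a * (R * b + Sp * (1 - b)) + (1 - a) * (T * b + Pp * (1 - b)))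
    (x P : Fin n → ℝ)
    (hP : ∀ i, P i = ∑ j ∈ Finset.univ.erase i, pay (x i) (x j))
    {i j : Fin n} (hij : i ≠ j) :
    P i - P j = (x j - x i) * ((T - Sp) +
      ∑ k ∈ (Finset.univ.erase i).erase j,
        (x k * (T - R) + (1 - x k) * (Pp - Sp))) := by
  have hji : j ∈ Finset.univ.erase i := Finset.mem_erase.mpr ⟨hij.symm, Finset.mem_univ j⟩
  have hij' : i ∈ Finset.univ.erase j := Finset.mem_erase.mpr ⟨hij, Finset.mem_univ i⟩
  rw [hP i, hP j, ← Finset.sum_erase_add _ _ hji, ← Finset.sum_erase_add _ _ hij',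
    Finset.erase_right_comm (s := (Finset.univ : Finset (Fin n))) (a := j) (b := i)]
  have key : ∑ k ∈ (Finset.univ.erase i).erase j, pay (x i) (x k)
      - ∑ k ∈ (Finset.univ.erase i).erase j, pay (x j) (x k)
      = (x j - x i) * ∑ k ∈ (Finset.univ.erase i).erase j,
          (x k * (T - R) + (1 - x k) * (Pp - Sp)) := by
    rw [← Finset.sum_sub_distrib, Finset.mul_sum]
    refine Finset.sum_congr rfl fun k _ => ?_
    rw [hpay, hpay]; ring
  have key2 : pay (x i) (x j) - pay (x j) (x i) = (x j - x i) * (T - Sp) := by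
    rw [hpay, hpay]; ring
  linear_combination key + key2

set_option maxHeartbeats 1000000 in
/-- Prisoner's dilemma on the complete graph: if player `lst` has maximal
initial payoff, then at every time `lst` plays defect with the highest
probability among all players, `lst`'s payoff remains maximal, and all
strategies converge to `lst`'s initial strategy. Here `x t i` is player `i`'s
probability of cooperation at time `t`. -/
theorem stmt14 {n : ℕ} (hn : 0 < n) (R Sp T Pp : ℝ)
    (hPD : Sp < Pp ∧ Pp < R ∧ R < T)
    (α : ℝ) (hα : 0 < α ∧ α < 1)
    (pay : ℝ → ℝ → ℝ)
    (hpay : ∀ a b, pay a b =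
      a * (R * b + Sp * (1 - b)) + (1 - a) * (T * b + Pp * (1 - b)))
    (x : ℕ → Fin n → ℝ) (hx0 : ∀ i, 0 ≤ x 0 i ∧ x 0 i ≤ 1)
    (P : ℕ → Fin n → ℝ)
    (hP : ∀ t i, P t i = ∑ j ∈ Finset.univ.erase i, pay (x t i) (x t j))
    (Sf : ℕ → Fin n → ℝ)
    (hS : ∀ t i, Sf t i = ∑ j ∈ Finset.univ.erase i, max 0 (P t j - P t i))
    (hdyn : ∀ t i, x (t + 1) i = x t i + α *
      (if 0 < Sf t i then
        ∑ j ∈ Finset.univ.erase i, (max 0 (P t j - P t i) / Sf t i) * (x t j - x t i)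
      else 0))
    (lst : Fin n) (hlst : ∀ i, P 0 i ≤ P 0 lst) :
    (∀ t i, x t lst ≤ x t i) ∧
    (∀ t i, P t i ≤ P t lst) ∧
    (∀ i, Tendsto (fun t => x t i) atTop (nhds (x 0 lst))) := by
  obtain ⟨hSP, hPR, hRT⟩ := hPD
  obtain ⟨hα0, hα1⟩ := hα
  have hTS : (0:ℝ) < T - Sp := by linarith
  set C0 : ℝ := max (T - R) (Pp - Sp) with hC0def
  have hC0 : 0 < C0 := lt_of_lt_of_le (by linarith : (0:ℝ) < T - R) (le_max_left _ _)
  set Kmax : ℝ := (T - Sp) + n * C0 with hKmaxdef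
  have hnpos : (0:ℝ) < n := by exact_mod_cast hn
  have hKmaxgt : T - Sp < Kmax := by
    have : (0:ℝ) < (n:ℝ) * C0 := mul_pos hnpos hC0
    rw [hKmaxdef]; linarith
  have hKmax0 : 0 < Kmax := hTS.trans hKmaxgt
  have hden : 0 < (n:ℝ) * Kmax := mul_pos hnpos hKmax0
  set c : ℝ := α * (T - Sp) / ((n:ℝ) * Kmax) with hcdef
  have hc0 : 0 < c := div_pos (mul_pos hα0 hTS) hden
  have hc1 : c < 1 := by
    rw [hcdef, div_lt_one hden]
    have h1 : α * (T - Sp) < T - Sp := by nlinarith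
    have h2 : Kmax ≤ (n:ℝ) * Kmax := by
      have : (1:ℝ) ≤ (n:ℝ) := by exact_mod_cast hn
      nlinarith
    linarith
  -- bounds on the factor K
  have hKb : ∀ (y : Fin n → ℝ), (∀ k, 0 ≤ y k ∧ y k ≤ 1) → ∀ i j : Fin n,
      T - Sp ≤ (T - Sp) + ∑ k ∈ (Finset.univ.erase i).erase j,
        (y k * (T - R) + (1 - y k) * (Pp - Sp)) ∧
      (T - Sp) + ∑ k ∈ (Finset.univ.erase i).erase j,
        (y k * (T - R) + (1 - y k) * (Pp - Sp)) ≤ Kmax := by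
    intro y hy i j
    constructor
    · have h0 : (0:ℝ) ≤ ∑ k ∈ (Finset.univ.erase i).erase j,
          (y k * (T - R) + (1 - y k) * (Pp - Sp)) :=
        Finset.sum_nonneg fun k _ => by nlinarith [(hy k).1, (hy k).2]
      linarith
    · have h1 : ∀ k ∈ (Finset.univ.erase i).erase j,
          y k * (T - R) + (1 - y k) * (Pp - Sp) ≤ C0 := by
        intro k _
        have h2 := (hy k).1; have h3 := (hy k).2
        have h4 : T - R ≤ C0 := le_max_left _ _
        have h5 : Pp - Sp ≤ C0 := le_max_right _ _
        nlinarith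
      have h6 := Finset.sum_le_card_nsmul _ _ _ h1
      rw [nsmul_eq_mul] at h6
      have h7 : (((Finset.univ.erase i).erase j).card : ℝ) ≤ n := by
        have h7a : ((Finset.univ.erase i).erase j).card ≤ n := by
          calc ((Finset.univ.erase i).erase j).card
              ≤ (Finset.univ.erase i).card := Finset.card_erase_le
            _ ≤ (Finset.univ : Finset (Fin n)).card := Finset.card_erase_le
            _ = n := by simp
        exact_mod_cast h7a
      have h8 : (((Finset.univ.erase i).erase j).card : ℝ) * C0 ≤ (n:ℝ) * C0 :=
        mul_le_mul_of_nonneg_right h7 hC0.le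
      rw [hKmaxdef]; linarith
  have hid : ∀ (t : ℕ) (i j : Fin n), i ≠ j → P t i - P t j = (x t j - x t i) *
      ((T - Sp) + ∑ k ∈ (Finset.univ.erase i).erase j,
        (x t k * (T - R) + (1 - x t k) * (Pp - Sp))) :=
    fun t i j hij => aux_payoff_id R Sp T Pp pay hpay (x t) (P t) (hP t) hij
  -- comparison of payoffs
  have hcomp : ∀ t, (∀ k, 0 ≤ x t k ∧ x t k ≤ 1) → ∀ i j : Fin n,
      x t j ≤ x t i → P t i ≤ P t j := by
    intro t hb i j hxx
    rcases eq_or_ne i j with rfl | hij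
    · exact le_refl _
    · have h := hid t i j hij
      have hK := hKb (x t) hb i j
      nlinarith [mul_nonpos_of_nonpos_of_nonneg (by linarith : x t j - x t i ≤ 0)
        (by linarith [hK.1] : (0:ℝ) ≤ (T - Sp) + ∑ k ∈ (Finset.univ.erase i).erase j,
          (x t k * (T - R) + (1 - x t k) * (Pp - Sp)))]
  have hstrict : ∀ t, (∀ k, 0 ≤ x t k ∧ x t k ≤ 1) → ∀ i j : Fin n,
      x t j < x t i → P t i < P t j := by
    intro t hb i j hxx
    have hij : i ≠ j := fun h => absurd (h ▸ hxx) (lt_irrefl _)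
    have h := hid t i j hij
    have hK := hKb (x t) hb i j
    nlinarith [mul_neg_of_neg_of_pos (by linarith : x t j - x t i < 0)
      (by linarith [hK.1] : (0:ℝ) < (T - Sp) + ∑ k ∈ (Finset.univ.erase i).erase j,
        (x t k * (T - R) + (1 - x t k) * (Pp - Sp)))]
  have hx0min : ∀ i, x 0 lst ≤ x 0 i := by
    intro i
    by_contra h
    push_neg at h
    exact absurd (hlst i) (not_le.mpr (hstrict 0 hx0 lst i h))
  have hSnonneg : ∀ t i, 0 ≤ Sf t i := by
    intro t i; rw [hS]; exact Finset.sum_nonneg fun j _ => le_max_left _ _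
  -- main step
  have hstep : ∀ t, ((∀ k, x 0 lst ≤ x t k ∧ x t k ≤ 1) ∧ x t lst = x 0 lst) →
      ((∀ k, x 0 lst ≤ x (t+1) k ∧ x (t+1) k ≤ 1) ∧ x (t+1) lst = x 0 lst) ∧
      (∀ i, P t i ≤ P t lst) ∧
      (∀ i, x (t+1) i - x 0 lst ≤ (1 - c) * (x t i - x 0 lst)) := by
    rintro t ⟨hb, hl⟩
    have hb' : ∀ k, 0 ≤ x t k ∧ x t k ≤ 1 :=
      fun k => ⟨(hx0 lst).1.trans (hb k).1, (hb k).2⟩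
    have hPmax : ∀ i, P t i ≤ P t lst :=
      fun i => hcomp t hb' i lst (by rw [hl]; exact (hb i).1)
    have hSzero_of_max : ∀ i, (∀ j, P t j ≤ P t i) → Sf t i = 0 := by
      intro i hmaxi
      rw [hS]
      exact Finset.sum_eq_zero fun j _ => max_eq_left (by linarith [hmaxi j])
    have hSlst : Sf t lst = 0 := hSzero_of_max lst hPmax
    have hxl1 : x (t+1) lst = x 0 lst := by
      rw [hdyn, hSlst]; simp [hl]
    have hxeq_of_S0 : ∀ i, Sf t i = 0 → x t i = x 0 lst := by
      intro i hS0
      rcases eq_or_ne i lst with rfl | hil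
      · exact hl
      · rw [hS] at hS0
        have hall := (Finset.sum_eq_zero_iff_of_nonneg
          (fun j _ => le_max_left 0 (P t j - P t i))).mp hS0
        have hlmem : lst ∈ Finset.univ.erase i :=
          Finset.mem_erase.mpr ⟨Ne.symm hil, Finset.mem_univ _⟩
        have hPl : P t lst ≤ P t i := by
          have h1 := hall lst hlmem
          by_contra hcon
          push_neg at hcon
          rw [max_eq_right (by linarith : (0:ℝ) ≤ P t lst - P t i)] at h1
          linarith
        have hle : x t i ≤ x t lst := by
          by_contra hcon
          push_neg at hcon
          exact absurd hPl (not_le.mpr (hstrict t hb' i lst hcon))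
        have h2 := (hb i).1
        apply le_antisymm <;> [skip; exact h2]
        rw [← hl]; exact hle
    have hmain : ∀ i, (x 0 lst ≤ x (t+1) i ∧ x (t+1) i ≤ 1) ∧
        x (t+1) i - x 0 lst ≤ (1 - c) * (x t i - x 0 lst) := by
      intro i
      by_cases hpos : 0 < Sf t i
      · -- moving case
        have hil : i ≠ lst := by
          rintro rfl; rw [hSlst] at hpos; exact lt_irrefl 0 hpos
        have hxm : x 0 lst < x t i := by
          rcases lt_or_eq_of_le (hb i).1 with h | h
          · exact h
          · exfalso
            have hPmaxi : ∀ j, P t j ≤ P t i :=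
              fun j => hcomp t hb' j i (by rw [← h]; exact (hb j).1)
            exact hpos.ne' (hSzero_of_max i hPmaxi)
        have hlmem : lst ∈ Finset.univ.erase i :=
          Finset.mem_erase.mpr ⟨Ne.symm hil, Finset.mem_univ _⟩
        have hSne : Sf t i ≠ 0 := hpos.ne'
        have hwsum : ∑ j ∈ Finset.univ.erase i, max 0 (P t j - P t i) / Sf t i = 1 := by
          rw [← Finset.sum_div, ← hS, div_self hSne]
        have hwnn : ∀ j, 0 ≤ max 0 (P t j - P t i) / Sf t i :=
          fun j => div_nonneg (le_max_left _ _) hpos.le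
        have hx1 : x (t+1) i = x t i + α * ∑ j ∈ Finset.univ.erase i,
            (max 0 (P t j - P t i) / Sf t i) * (x t j - x t i) := by
          rw [hdyn, if_pos hpos]
        have hterm_np : ∀ j ∈ Finset.univ.erase i,
            (max 0 (P t j - P t i) / Sf t i) * (x t j - x t i) ≤ 0 := by
          intro j hj
          rcases le_or_gt (x t j) (x t i) with h | h
          · exact mul_nonpos_of_nonneg_of_nonpos (hwnn j) (by linarith)
          · have hPji : P t j < P t i := hstrict t hb' j i h
            rw [max_eq_left (by linarith), zero_div, zero_mul]
        have hterm_lb : ∀ j ∈ Finset.univ.erase i,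
            (max 0 (P t j - P t i) / Sf t i) * (x 0 lst - x t i) ≤
            (max 0 (P t j - P t i) / Sf t i) * (x t j - x t i) :=
          fun j _ => mul_le_mul_of_nonneg_left (by linarith [(hb j).1]) (hwnn j)
        have hsum_lb : x 0 lst - x t i ≤ ∑ j ∈ Finset.univ.erase i,
            (max 0 (P t j - P t i) / Sf t i) * (x t j - x t i) := by
          calc x 0 lst - x t i
              = (∑ j ∈ Finset.univ.erase i, max 0 (P t j - P t i) / Sf t i) *
                  (x 0 lst - x t i) := by rw [hwsum, one_mul]
            _ = ∑ j ∈ Finset.univ.erase i,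
                  (max 0 (P t j - P t i) / Sf t i) * (x 0 lst - x t i) := by
                rw [Finset.sum_mul]
            _ ≤ _ := Finset.sum_le_sum hterm_lb
        have hsum_ub : ∑ j ∈ Finset.univ.erase i,
            (max 0 (P t j - P t i) / Sf t i) * (x t j - x t i) ≤ 0 :=
          Finset.sum_nonpos hterm_np
        -- split off the lst term
        have hsplit : ∑ j ∈ Finset.univ.erase i,
            (max 0 (P t j - P t i) / Sf t i) * (x t j - x t i)
            = (∑ j ∈ (Finset.univ.erase i).erase lst,
                (max 0 (P t j - P t i) / Sf t i) * (x t j - x t i)) +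
              (max 0 (P t lst - P t i) / Sf t i) * (x t lst - x t i) :=
          (Finset.sum_erase_add _ _ hlmem).symm
        have hrest : ∑ j ∈ (Finset.univ.erase i).erase lst,
            (max 0 (P t j - P t i) / Sf t i) * (x t j - x t i) ≤ 0 :=
          Finset.sum_nonpos fun j hj => hterm_np j (Finset.mem_of_mem_erase hj)
        have hDelta : ∑ j ∈ Finset.univ.erase i,
            (max 0 (P t j - P t i) / Sf t i) * (x t j - x t i)
            ≤ (max 0 (P t lst - P t i) / Sf t i) * (x 0 lst - x t i) := by
          rw [hsplit, hl]; linarith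
        -- numerator lower bound
        have hPd := hid t lst i (Ne.symm hil)
        have hKl := hKb (x t) hb' lst i
        have hnum : (x t i - x 0 lst) * (T - Sp) ≤ max 0 (P t lst - P t i) := by
          rw [hl] at hPd
          have h2 : (x t i - x 0 lst) * (T - Sp) ≤ P t lst - P t i := by
            rw [hPd]
            exact mul_le_mul_of_nonneg_left hKl.1 (by linarith)
          exact h2.trans (le_max_right _ _)
        -- denominator upper bound
        have hBnn : 0 ≤ (x t i - x 0 lst) * Kmax := mul_nonneg (by linarith) hKmax0.le
        have hden2 : Sf t i ≤ (n:ℝ) * ((x t i - x 0 lst) * Kmax) := by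
          rw [hS]
          have hb1 : ∀ j ∈ Finset.univ.erase i,
              max 0 (P t j - P t i) ≤ (x t i - x 0 lst) * Kmax := by
            intro j hj
            have hji : j ≠ i := (Finset.mem_erase.mp hj).1
            rcases le_or_gt (P t j) (P t i) with h | h
            · rw [max_eq_left (by linarith)]; exact hBnn
            · rw [max_eq_right (by linarith)]
              have hidj := hid t j i hji
              have hKj := hKb (x t) hb' j i
              have hxji : x t j < x t i := by
                by_contra hcc
                push_neg at hcc
                exact absurd (hcomp t hb' j i hcc) (not_le.mpr h)
              have h3 : x t i - x t j ≤ x t i - x 0 lst := by linarith [(hb j).1]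
              calc P t j - P t i
                  = (x t i - x t j) * ((T - Sp) +
                      ∑ k ∈ (Finset.univ.erase j).erase i,
                        (x t k * (T - R) + (1 - x t k) * (Pp - Sp))) := by
                    linarith [hidj]
                _ ≤ (x t i - x 0 lst) * ((T - Sp) +
                      ∑ k ∈ (Finset.univ.erase j).erase i,
                        (x t k * (T - R) + (1 - x t k) * (Pp - Sp))) :=
                    mul_le_mul_of_nonneg_right h3 (by linarith [hKj.1])
                _ ≤ (x t i - x 0 lst) * Kmax :=
                    mul_le_mul_of_nonneg_left hKj.2 (by linarith)
          have h6 := Finset.sum_le_card_nsmul _ _ _ hb1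
          rw [nsmul_eq_mul] at h6
          have h7 : ((Finset.univ.erase i).card : ℝ) ≤ n := by
            have h7a : (Finset.univ.erase i).card ≤ n := by
              calc (Finset.univ.erase i).card
                  ≤ (Finset.univ : Finset (Fin n)).card := Finset.card_erase_le
                _ = n := by simp
            exact_mod_cast h7a
          calc ∑ j ∈ Finset.univ.erase i, max 0 (P t j - P t i)
              ≤ ((Finset.univ.erase i).card : ℝ) * ((x t i - x 0 lst) * Kmax) := h6
            _ ≤ (n:ℝ) * ((x t i - x 0 lst) * Kmax) :=
                mul_le_mul_of_nonneg_right h7 hBnn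
        -- lower bound on α * w_lst
        have hw : c ≤ α * (max 0 (P t lst - P t i) / Sf t i) := by
          rw [hcdef, ← mul_div_assoc, div_le_div_iff₀ hden hpos]
          have e1 : α * (T - Sp) * Sf t i
              ≤ α * (T - Sp) * ((n:ℝ) * ((x t i - x 0 lst) * Kmax)) :=
            mul_le_mul_of_nonneg_left hden2 (by positivity)
          have e2 : α * ((x t i - x 0 lst) * (T - Sp)) * ((n:ℝ) * Kmax)
              ≤ α * max 0 (P t lst - P t i) * ((n:ℝ) * Kmax) :=
            mul_le_mul_of_nonneg_right
              (mul_le_mul_of_nonneg_left hnum hα0.le) hden.le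
          have e3 : α * (T - Sp) * ((n:ℝ) * ((x t i - x 0 lst) * Kmax))
              = α * ((x t i - x 0 lst) * (T - Sp)) * ((n:ℝ) * Kmax) := by ring
          linarith
        constructor
        · constructor
          · rw [hx1]
            have h9 := mul_le_mul_of_nonneg_left hsum_lb hα0.le
            have h9' := mul_nonneg (by linarith : (0:ℝ) ≤ 1 - α)
              (by linarith [hxm.le] : (0:ℝ) ≤ x t i - x 0 lst)
            linarith
          · rw [hx1]
            have h9 := mul_nonpos_of_nonneg_of_nonpos hα0.le hsum_ub
            linarith [(hb i).2]
        · rw [hx1]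
          have h10 := mul_le_mul_of_nonneg_left hDelta hα0.le
          have h12 := mul_le_mul_of_nonneg_right hw
            (by linarith [hxm.le] : (0:ℝ) ≤ x t i - x 0 lst)
          have h13 : α * ((max 0 (P t lst - P t i) / Sf t i) * (x 0 lst - x t i))
              = -((α * (max 0 (P t lst - P t i) / Sf t i)) * (x t i - x 0 lst)) := by
            ring
          linarith [h10, h12, h13]
      · -- stationary case
        have hS0 : Sf t i = 0 := le_antisymm (not_lt.mp hpos) (hSnonneg t i)
        have hxi : x t i = x 0 lst := hxeq_of_S0 i hS0
        have hx1 : x (t+1) i = x t i := by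
          rw [hdyn, if_neg hpos, mul_zero, add_zero]
        refine ⟨⟨?_, ?_⟩, ?_⟩
        · rw [hx1]; exact (hb i).1
        · rw [hx1]; exact (hb i).2
        · rw [hx1, hxi]; simp
    exact ⟨⟨fun k => (hmain k).1, hxl1⟩, hPmax, fun i => (hmain i).2⟩
  -- invariant holds at all times
  have hInv : ∀ t, (∀ k, x 0 lst ≤ x t k ∧ x t k ≤ 1) ∧ x t lst = x 0 lst := by
    intro t
    induction t with
    | zero => exact ⟨fun k => ⟨hx0min k, (hx0 k).2⟩, rfl⟩
    | succ t ih => exact (hstep t ih).1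
  have hPmaxAll : ∀ t i, P t i ≤ P t lst := fun t i => (hstep t (hInv t)).2.1 i
  have hdecay : ∀ t i, x t i - x 0 lst ≤ (1 - c) ^ t * (x 0 i - x 0 lst) := by
    intro t
    induction t with
    | zero => intro i; simp
    | succ t ih =>
      intro i
      have h1 := (hstep t (hInv t)).2.2 i
      calc x (t+1) i - x 0 lst ≤ (1 - c) * (x t i - x 0 lst) := h1
        _ ≤ (1 - c) * ((1 - c) ^ t * (x 0 i - x 0 lst)) :=
            mul_le_mul_of_nonneg_left (ih i) (by linarith)
        _ = (1 - c) ^ (t+1) * (x 0 i - x 0 lst) := by ring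
  refine ⟨fun t i => by rw [(hInv t).2]; exact ((hInv t).1 i).1, hPmaxAll, ?_⟩
  intro i
  have hpow : Tendsto (fun t : ℕ => (1 - c) ^ t * (x 0 i - x 0 lst)) atTop (nhds 0) := by
    have h := tendsto_pow_atTop_nhds_zero_of_lt_one (by linarith : (0:ℝ) ≤ 1 - c)
      (by linarith : 1 - c < 1)
    simpa using h.mul_const (x 0 i - x 0 lst)
  have hupT : Tendsto (fun t : ℕ => x 0 lst + (1 - c) ^ t * (x 0 i - x 0 lst)) atTop
      (nhds (x 0 lst)) := by
    simpa using (tendsto_const_nhds (x := x 0 lst) (f := atTop)).add hpow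
  exact tendsto_of_tendsto_of_tendsto_of_le_of_le tendsto_const_nhds hupT
    (fun t => ((hInv t).1 i).1) (fun t => by linarith [hdecay t i])
end
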